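/- arXiv:1904.01794 — 4 statements merged into one kernel-verified Lean document; each statement's English description precedes it below -/
import Mathlib

section
/- Let G be a bipartite graph with bipartition (X,Y), and let C be an even cycle in G of length 2m ≥ 6. Suppose u' ∈ X and u'' ∈ Y are vertices not on C with d(u', C) + d(u'', C) ≥ 2m − 1. Then there exists a vertex v on C adjacent to u' such that the graph induced on (V(C) ∪ {u''}) \ {v} contains a cycle of length 2m. -/
/-!
Since `u' ∈ X` and `u'' ∈ Y`, no vertex of `C` is adjacent to both, so the degree bound leaves at
most one vertex `k` of `C` adjacent to neither. Walk around `C` from `k`: the next four vertices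
(distinct from `k` because `2m ≥ 6`) are each adjacent to `u'` or `u''`, and, the graph being
triangle-free, no two consecutive ones share that neighbour. Hence three consecutive ones
`a, v, b` satisfy `u'' ~ a`, `u' ~ v`, `u'' ~ b`, and replacing `v` by `u''` keeps a cycle of
length `2m`.
-/

open Finset

theorem Finset.exists_forall_ne_of_card_le_card_filter_add_one {α : Type*} {s : Finset α}
    {P : α → Prop} [DecidablePred P] (hs : s.Nonempty) (h : #s ≤ #(s.filter P) + 1) :
    ∃ k ∈ s, ∀ x ∈ s, x ≠ k → P x := by
  have hbad : #(s.filter fun x ↦ ¬P x) ≤ 1 := by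
    have := card_filter_add_card_filter_not (s := s) P
    omega
  by_cases hk : ∃ k ∈ s, ¬P k
  · obtain ⟨k, hks, hPk⟩ := hk
    refine ⟨k, hks, fun x hxs hxk ↦ by_contra fun hPx ↦ hxk ?_⟩
    exact card_le_one.mp hbad x (mem_filter.2 ⟨hxs, hPx⟩) k (mem_filter.2 ⟨hks, hPk⟩)
  · push Not at hk
    obtain ⟨k, hks⟩ := hs
    exact ⟨k, hks, fun x hxs _ ↦ hk x hxs⟩

namespace SimpleGraph.Walk

variable {V : Type*} {G : SimpleGraph V}

theorem IsCycle.card_toFinset_support [DecidableEq V] {u : V} {c : G.Walk u u}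
    (hc : c.IsCycle) : #c.support.toFinset = c.length := by
  have hu : u ∈ c.support.tail := end_mem_tail_support hc.not_nil
  rw [← cons_tail_support, List.toFinset_cons, insert_eq_of_mem (List.mem_toFinset.2 hu),
    List.toFinset_card_of_nodup hc.support_nodup, List.length_tail, length_support,
    Nat.add_sub_cancel]

theorem isCycle_iff_nodup_tail_support {u : V} {c : G.Walk u u} :
    c.IsCycle ↔ c.support.tail.Nodup ∧ 3 ≤ c.length := by
  refine ⟨fun hc ↦ ⟨hc.support_nodup, hc.three_le_length⟩, fun ⟨hnd, hlen⟩ ↦ ?_⟩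
  have hnil : ¬c.Nil := fun h ↦ by simp [h.length_eq_zero] at hlen
  rw [isCycle_iff_isPath_tail_and_le_length, isPath_def, support_tail_of_not_nil _ hnil]
  exact ⟨hnd, hlen⟩

theorem IsCycle.exists_replace_vertex {x a v b w : V} {c : G.Walk x x} {p : G.Walk x a}
    {q : G.Walk b x} {hav : G.Adj a v} {hvb : G.Adj v b} (hc : c.IsCycle)
    (hcpq : c = p.append (cons hav (cons hvb q))) (hw : w ∉ c.support)
    (haw : G.Adj a w) (hwb : G.Adj w b) :
    ∃ d : G.Walk x x, d.IsCycle ∧ d.length = c.length ∧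
      ∀ y ∈ d.support, (y ∈ c.support ∨ y = w) ∧ y ≠ v := by
  subst hcpq
  rw [isCycle_iff_nodup_tail_support, tail_support_append, support_cons, support_cons,
    List.tail_cons, List.nodup_middle, List.nodup_cons] at hc
  simp only [mem_support_append_iff, support_cons, List.mem_cons, not_or] at hw
  obtain ⟨⟨hvpq, hpq⟩, hlen⟩ := hc
  refine ⟨p.append (cons haw (cons hwb q)), ?_, by simp, fun y hy ↦ ?_⟩
  · rw [isCycle_iff_nodup_tail_support, tail_support_append, support_cons, support_cons,
      List.tail_cons, List.nodup_middle, List.nodup_cons]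
    refine ⟨⟨?_, hpq⟩, by simpa using hlen⟩
    simp only [List.mem_append, not_or]
    exact ⟨fun h ↦ hw.1 (List.mem_of_mem_tail h), hw.2.2.2⟩
  · have hvq : v ∉ q.support := fun h ↦ hvpq (List.mem_append_right _ h)
    have hvp : v ∉ p.support := by
      rw [← cons_tail_support, List.mem_cons, not_or]
      exact ⟨fun h ↦ hvq (h ▸ q.end_mem_support), fun h ↦ hvpq (List.mem_append_left _ h)⟩
    simp only [mem_support_append_iff, support_cons, List.mem_cons] at hy ⊢
    rcases hy with hy | rfl | rfl | hy
    · exact ⟨Or.inl (Or.inl hy), fun h ↦ hvp (h ▸ hy)⟩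
    · exact ⟨Or.inl (Or.inr (Or.inl rfl)), hav.ne⟩
    · exact ⟨Or.inr rfl, hw.2.2.1⟩
    · exact ⟨Or.inl (Or.inr (Or.inr (Or.inr hy))), fun h ↦ hvq (h ▸ hy)⟩

theorem IsCycle.exists_eq_append_cons_cons {k u' u'' : V} {c : G.Walk k k} (hc : c.IsCycle)
    (hG : G.CliqueFree 3) (hlen : 5 ≤ c.length)
    (hcover : ∀ x ∈ c.support, x ≠ k → G.Adj u' x ∨ G.Adj u'' x) :
    ∃ (a v b : V) (p : G.Walk k a) (hav : G.Adj a v) (hvb : G.Adj v b) (q : G.Walk b k),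
      c = p.append (cons hav (cons hvb q)) ∧ G.Adj u' v ∧ G.Adj u'' a ∧ G.Adj u'' b := by
  have hG' {u x y : V} (hx : G.Adj u x) (hy : G.Adj u y) : ¬G.Adj x y := fun hxy ↦
    isIndepSet_neighborSet_of_triangleFree G hG u hx hy hxy.ne hxy
  rcases c with _ | @⟨_, g₁, _, h₁, _ | @⟨_, g₂, _, h₂, _ | @⟨_, g₃, _, h₃, _ |
    @⟨_, g₄, _, h₄, _ | ⟨h₅, r⟩⟩⟩⟩⟩ <;> simp only [length_nil, length_cons] at hlen <;> try omega
  have hnd := hc.support_nodup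
  simp only [support_cons, List.tail_cons, List.nodup_cons, List.mem_cons, not_or] at hnd
  obtain ⟨⟨-, -, -, hg₁⟩, ⟨-, -, hg₂⟩, ⟨-, hg₃⟩, hg₄, -⟩ := hnd
  have hk := r.end_mem_support
  simp only [support_cons, List.mem_cons, forall_eq_or_imp] at hcover
  obtain ⟨-, c₁, c₂, c₃, c₄, -⟩ := hcover
  replace c₁ := c₁ fun h ↦ hg₁ (h ▸ hk)
  replace c₂ := c₂ fun h ↦ hg₂ (h ▸ hk)
  replace c₃ := c₃ fun h ↦ hg₃ (h ▸ hk)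
  replace c₄ := c₄ fun h ↦ hg₄ (h ▸ hk)
  by_cases h₂' : G.Adj u' g₂
  · exact ⟨g₁, g₂, g₃, cons h₁ nil, h₂, h₃, cons h₄ (cons h₅ r), rfl, h₂',
      c₁.resolve_left (hG' · h₂' h₂), c₃.resolve_left (hG' h₂' · h₃)⟩
  · have h₂'' := c₂.resolve_left h₂'
    have h₃' := c₃.resolve_right (hG' h₂'' · h₃)
    exact ⟨g₂, g₃, g₄, cons h₁ (cons h₂ nil), h₃, h₄, cons h₅ r, rfl, h₃', h₂'',
      c₄.resolve_left (hG' h₃' · h₄)⟩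

theorem IsCycle.exists_replace_adj_vertex {k u' u'' : V} {c : G.Walk k k} (hc : c.IsCycle)
    (hG : G.CliqueFree 3) (hlen : 5 ≤ c.length) (hu'' : u'' ∉ c.support)
    (hcover : ∀ x ∈ c.support, x ≠ k → G.Adj u' x ∨ G.Adj u'' x) :
    ∃ v ∈ c.support, G.Adj u' v ∧ ∃ d : G.Walk k k, d.IsCycle ∧ d.length = c.length ∧
      ∀ y ∈ d.support, (y ∈ c.support ∨ y = u'') ∧ y ≠ v := by
  obtain ⟨a, v, b, p, hav, hvb, q, hcpq, hu'v, hu''a, hu''b⟩ :=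
    hc.exists_eq_append_cons_cons hG hlen hcover
  exact ⟨v, by simp [hcpq], hu'v, hc.exists_replace_vertex hcpq hu'' hu''a.symm hu''b⟩

end SimpleGraph.Walk

open SimpleGraph Walk

theorem swap_vertex_into_cycle_general {V : Type*} [DecidableEq V]
    (G : SimpleGraph V) [DecidableRel G.Adj]
    (X Y : Finset V) (hdisj : Disjoint X Y)
    (hbip : ∀ a b, G.Adj a b → (a ∈ X ∧ b ∈ Y) ∨ (a ∈ Y ∧ b ∈ X))
    (m : ℕ) (hm : 3 ≤ m)
    (v₀ : V) (c : G.Walk v₀ v₀) (hc : c.IsCycle) (hlen : c.length = 2 * m)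
    (u' u'' : V) (hu'' : u'' ∉ c.support)
    (hu'X : u' ∈ X) (hu''Y : u'' ∈ Y)
    (hnbr : 2 * m - 1 ≤ (c.support.toFinset.filter (fun w => G.Adj u' w)).card
      + (c.support.toFinset.filter (fun w => G.Adj u'' w)).card) :
    ∃ v ∈ c.support, G.Adj u' v ∧
      ∃ (w : V) (d : G.Walk w w), d.IsCycle ∧ d.length = 2 * m ∧
        ∀ x ∈ d.support, (x ∈ c.support ∨ x = u'') ∧ x ≠ v := by
  have hXY : G.IsBipartiteWith X Y := ⟨disjoint_coe.2 hdisj, hbip⟩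
  have hN : Disjoint (c.support.toFinset.filter fun w ↦ G.Adj u' w)
      (c.support.toFinset.filter fun w ↦ G.Adj u'' w) :=
    disjoint_filter.2 fun x _ h' h'' ↦ disjoint_left.1 hdisj
      (mem_coe.1 (hXY.symm.mem_of_mem_adj hu''Y h'')) (mem_coe.1 (hXY.mem_of_mem_adj hu'X h'))
  obtain ⟨k, hk, hcover⟩ := exists_forall_ne_of_card_le_card_filter_add_one
    (P := fun x ↦ G.Adj u' x ∨ G.Adj u'' x) (s := c.support.toFinset)
    ⟨v₀, List.mem_toFinset.2 c.start_mem_support⟩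
    (by rw [filter_or, card_union_of_disjoint hN, hc.card_toFinset_support]; omega)
  simp only [List.mem_toFinset] at hk hcover
  obtain ⟨v, hv, hu'v, d, hd, hdlen, hdsupp⟩ := (hc.rotate hk).exists_replace_adj_vertex
    (hXY.isBipartite.cliqueFree (by norm_num)) (by simp; omega) (by simpa using hu'')
    (by simpa using hcover)
  simp only [mem_support_rotate_iff, length_rotate] at hv hdlen hdsupp
  exact ⟨v, hv, hu'v, k, d, hd, hdlen.trans hlen, hdsupp⟩

/-- Let G be bipartite with bipartition (X,Y) and C an even cycle of
length 2m ≥ 6. If u' ∈ X and u'' ∈ Y are off C with d(u',C) + d(u'',C) ≥ 2m − 1,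
then there is a vertex v on C adjacent to u' such that the graph induced on
(V(C) ∪ {u''}) \ {v} contains a cycle of length 2m. -/
theorem swap_vertex_into_cycle {V : Type*} [DecidableEq V]
    (G : SimpleGraph V) [DecidableRel G.Adj]
    (X Y : Finset V) (hdisj : Disjoint X Y) (hcover : ∀ w : V, w ∈ X ∨ w ∈ Y)
    (hbip : ∀ a b, G.Adj a b → (a ∈ X ∧ b ∈ Y) ∨ (a ∈ Y ∧ b ∈ X))
    (m : ℕ) (hm : 3 ≤ m)
    (v₀ : V) (c : G.Walk v₀ v₀) (hc : c.IsCycle) (hlen : c.length = 2 * m)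
    (u' u'' : V) (hu' : u' ∉ c.support) (hu'' : u'' ∉ c.support)
    (hu'X : u' ∈ X) (hu''Y : u'' ∈ Y)
    (hnbr : 2 * m - 1 ≤ (c.support.toFinset.filter (fun w => G.Adj u' w)).card
      + (c.support.toFinset.filter (fun w => G.Adj u'' w)).card) :
    ∃ v ∈ c.support, G.Adj u' v ∧
      ∃ (w : V) (d : G.Walk w w), d.IsCycle ∧ d.length = 2 * m ∧
        ∀ x ∈ d.support, (x ∈ c.support ∨ x = u'') ∧ x ≠ v :=
  swap_vertex_into_cycle_general G X Y hdisj hbip m hm v₀ c hc hlen u' u'' hu'' hu'X hu''Y hnbr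
end

section
/- Let G be a bipartite graph containing no cycle of length at least 2t (t ≥ 2), and let P = u₁⋯u_s be a longest path in G. Then d(u₁, G) ≤ t − 1 and d(u_s, G) ≤ t − 1. -/
section Aux

variable {V : Type*} [Fintype V] [DecidableEq V] (G : SimpleGraph V) [DecidableRel G.Adj]

lemma getVert_append_len {a b c : V} (q : G.Walk a b) (r : G.Walk b c) :
    (q.append r).getVert q.length = b := by
  rw [SimpleGraph.Walk.getVert_append]
  simp [SimpleGraph.Walk.getVert_zero]

lemma edge_not_mem_long_path {u w : V} (q : G.Walk u w) (hq : q.IsPath)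
    (hl : 2 ≤ q.length) : s(u, w) ∉ q.edges := by
  intro hmem
  cases q with
  | nil => simp at hmem
  | @cons _ x _ h₁ q₁ =>
    rw [SimpleGraph.Walk.edges_cons, List.mem_cons] at hmem
    rcases hmem with heq | hm
    · have hwx : w = x := Sym2.congr_right.mp heq
      subst hwx
      have h2 : q₁.IsPath := ((SimpleGraph.Walk.cons_isPath_iff _ _).1 hq).1
      have h3 : q₁ = SimpleGraph.Walk.nil := SimpleGraph.Walk.isPath_iff_eq_nil.1 h2
      subst h3
      simp at hl
    · have : u ∈ q₁.support := SimpleGraph.Walk.fst_mem_support_of_mem_edges _ hm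
      exact ((SimpleGraph.Walk.cons_isPath_iff _ _).1 hq).2 this

/-- Parity along a walk in a bipartite graph. -/
lemma walk_parity (X Y : Finset V) (hdisj : Disjoint X Y)
    (hbip : ∀ a b, G.Adj a b → (a ∈ X ∧ b ∈ Y) ∨ (a ∈ Y ∧ b ∈ X))
    {a b : V} (q : G.Walk a b) : (b ∈ X ↔ (Even q.length ↔ a ∈ X)) := by
  induction q with
  | nil => simp
  | @cons a c b h q ih =>
    have hflip : c ∈ X ↔ ¬ a ∈ X := by
      rcases hbip a c h with ⟨ha, hc⟩ | ⟨ha, hc⟩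
      · have := Finset.disjoint_right.mp hdisj hc
        tauto
      · have := Finset.disjoint_right.mp hdisj ha
        tauto
    rw [ih, hflip]
    simp only [SimpleGraph.Walk.length_cons, Nat.even_add_one]
    tauto

lemma endpoint_degree_bound (X Y : Finset V) (hdisj : Disjoint X Y)
    (hbip : ∀ a b, G.Adj a b → (a ∈ X ∧ b ∈ Y) ∨ (a ∈ Y ∧ b ∈ X))
    (t : ℕ) (ht : 2 ≤ t)
    (hnocycle : ∀ (w : V) (c : G.Walk w w), c.IsCycle → c.length < 2 * t)
    {u v : V} (p : G.Walk u v) (hp : p.IsPath)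
    (hmax : ∀ (a b : V) (q : G.Walk a b), q.IsPath → q.length ≤ p.length) :
    G.degree u ≤ t - 1 := by
  classical
  -- every neighbor of u lies on p
  have hmem : ∀ w, G.Adj u w → w ∈ p.support := by
    intro w hw
    by_contra hws
    have hpath : (SimpleGraph.Walk.cons hw.symm p).IsPath :=
      (SimpleGraph.Walk.cons_isPath_iff _ _).2 ⟨hp, hws⟩
    have := hmax _ _ _ hpath
    simp [SimpleGraph.Walk.length_cons] at this
  -- the index function
  set f : V → ℕ := fun w => if h : w ∈ p.support then (p.takeUntil w h).length else 0 with hf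
  have hfval : ∀ (w) (h : w ∈ p.support), f w = (p.takeUntil w h).length := by
    intro w h; simp [hf, h]
  -- getVert at the index recovers the vertex
  have hget : ∀ (w) (h : w ∈ p.support), p.getVert (f w) = w := by
    intro w h
    have h2 := getVert_append_len G (p.takeUntil w h) (p.dropUntil w h)
    rw [p.take_spec h] at h2
    rw [hfval w h]
    exact h2
  -- indices of neighbors are odd
  have hodd : ∀ w, G.Adj u w → Odd (f w) := by
    intro w hw
    have h := hmem w hw
    have hflip : w ∈ X ↔ ¬ u ∈ X := by
      rcases hbip u w hw with ⟨ha, hc⟩ | ⟨ha, hc⟩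
      · have := Finset.disjoint_right.mp hdisj hc
        tauto
      · have := Finset.disjoint_right.mp hdisj ha
        tauto
    have hpar := walk_parity G X Y hdisj hbip (p.takeUntil w h)
    rw [← hfval w h] at hpar
    rw [← Nat.not_even_iff_odd]
    tauto
  -- indices of neighbors are small, else a long cycle
  have hsmall : ∀ w, G.Adj u w → f w ≤ 2 * t - 3 := by
    intro w hw
    by_contra hbig
    push_neg at hbig
    have hwsup := hmem w hw
    have hlen : 2 * t - 1 ≤ f w := by
      rcases hodd w hw with ⟨k, hk⟩
      omega
    set q := p.takeUntil w hwsup with hq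
    have hqpath : q.IsPath := hp.takeUntil hwsup
    have hqlen : q.length = f w := (hfval w hwsup).symm
    -- the edge s(u,w) is not on q
    have hedge : s(u, w) ∉ q.edges :=
      edge_not_mem_long_path G q hqpath (by omega)
    -- build the cycle
    have hcyc : (SimpleGraph.Walk.cons hw q.reverse).IsCycle := by
      rw [SimpleGraph.Walk.cons_isCycle_iff]
      refine ⟨hqpath.reverse, ?_⟩
      rw [SimpleGraph.Walk.edges_reverse, List.mem_reverse]
      exact hedge
    have := hnocycle u _ hcyc
    rw [SimpleGraph.Walk.length_cons, SimpleGraph.Walk.length_reverse, hqlen] at this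
    omega
  -- counting
  have hsub : ∀ w ∈ G.neighborFinset u,
      f w ∈ (Finset.range (t - 1)).image (fun k => 2 * k + 1) := by
    intro w hw
    rw [SimpleGraph.mem_neighborFinset] at hw
    rcases hodd w hw with ⟨k, hk⟩
    have := hsmall w hw
    refine Finset.mem_image.2 ⟨k, Finset.mem_range.2 ?_, ?_⟩ <;> omega
  have hinj : Set.InjOn f (G.neighborFinset u) := by
    intro a ha b hb hab
    rw [Finset.mem_coe, SimpleGraph.mem_neighborFinset] at ha hb
    have := hget a (hmem a ha)
    rw [hab, hget b (hmem b hb)] at this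
    exact this.symm
  calc G.degree u = (G.neighborFinset u).card := rfl
    _ ≤ ((Finset.range (t - 1)).image (fun k => 2 * k + 1)).card :=
        Finset.card_le_card_of_injOn f hsub hinj
    _ ≤ t - 1 := le_trans Finset.card_image_le (by simp)

end Aux

/-- bipartite version: Let G be a bipartite graph containing no cycle
of length at least 2t (t ≥ 2), and let P be a longest path in G with end-vertices
u₁ and u_s. Then d(u₁,G) ≤ t − 1 and d(u_s,G) ≤ t − 1. -/
theorem longest_path_endpoint_degree_bound {V : Type*} [Fintype V] [DecidableEq V]
    (G : SimpleGraph V) [DecidableRel G.Adj]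
    (X Y : Finset V) (hdisj : Disjoint X Y) (hcover : X ∪ Y = Finset.univ)
    (hbip : ∀ a b, G.Adj a b → (a ∈ X ∧ b ∈ Y) ∨ (a ∈ Y ∧ b ∈ X))
    (t : ℕ) (ht : 2 ≤ t)
    (hnocycle : ∀ (w : V) (c : G.Walk w w), c.IsCycle → c.length < 2 * t)
    {u v : V} (p : G.Walk u v) (hp : p.IsPath)
    (hmax : ∀ (a b : V) (q : G.Walk a b), q.IsPath → q.length ≤ p.length) :
    G.degree u ≤ t - 1 ∧ G.degree v ≤ t - 1 := by
  constructor
  · exact endpoint_degree_bound G X Y hdisj hbip t ht hnocycle p hp hmax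
  · refine endpoint_degree_bound G X Y hdisj hbip t ht hnocycle p.reverse hp.reverse ?_
    intro a b q hq
    rw [SimpleGraph.Walk.length_reverse]
    exact hmax a b q hq
end

section
/- Let G be a bipartite graph with bipartition (X,Y) containing no cycle of length at least 2t (t ≥ 2), and let P = u₁u₂⋯u_s be a Hamilton path of G (so V(P) = V(G)). Then d(u₂, G) ≤ t and d(u_{s−1}, G) ≤ t. -/
/-!
Index the Hamilton path from 0, so `u₂` sits at position 1. Every neighbour of `u₂` lies on the
path, say at position `i`. Following the path from position 1 to `i` and returning along the edge
gives a closed walk of length `i - 1 + 1`, so `i` is even by bipartiteness, and for `i ≥ 3` that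
walk is a cycle, so `i < 2t`. Hence the neighbours of `u₂` lie at the `t` positions
`0, 2, …, 2t - 2` (using `t ≥ 2` for the positions 0 and 2, which give no cycle).
The bound for `u_{s-1}` is the same statement for the reversed path.
-/

open SimpleGraph

namespace SimpleGraph.Walk

variable {V : Type*} {G : SimpleGraph V} {u v : V}

lemma exists_isSubwalk_getVert_getVert (p : G.Walk u v) {i j : ℕ} (hji : j ≤ i)
    (hi : i ≤ p.length) :
    ∃ q : G.Walk (p.getVert j) (p.getVert i), q.IsSubwalk p ∧ q.length = i - j := by
  have hend : (p.drop j).getVert (i - j) = p.getVert i := by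
    rw [drop_getVert, Nat.add_sub_cancel' hji]
  refine ⟨((p.drop j).take (i - j)).copy rfl hend, ?_, by simp; omega⟩
  exact ((isSubwalk_take _ _).trans (isSubwalk_drop _ _)).copy rfl hend rfl rfl

lemma odd_add_of_adj_getVert (hG : G.IsBipartite) (p : G.Walk u v) {i j : ℕ}
    (hi : i ≤ p.length) (hj : j ≤ p.length) (h : G.Adj (p.getVert i) (p.getVert j)) :
    Odd (i + j) := by
  wlog hji : j ≤ i generalizing i j
  · rw [add_comm]; exact this hj hi h.symm (by omega)
  obtain ⟨q, -, hq⟩ := p.exists_isSubwalk_getVert_getVert hji hi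
  have heven : Even (cons h q).length := two_colorable_iff_forall_loop_even.mp hG _ _
  rw [length_cons, hq, Nat.even_add_one, Nat.not_even_iff_odd] at heven
  rw [show i + j = i - j + 2 * j by omega]
  exact heven.add_even (even_two_mul j)

lemma IsPath.exists_isCycle_of_adj_getVert {p : G.Walk u v} (hp : p.IsPath) {i j : ℕ}
    (hji : j + 2 ≤ i) (hi : i ≤ p.length) (h : G.Adj (p.getVert i) (p.getVert j)) :
    ∃ c : G.Walk (p.getVert i) (p.getVert i), c.IsCycle ∧ c.length = i - j + 1 := by
  obtain ⟨q, hqp, hq⟩ := p.exists_isSubwalk_getVert_getVert (by omega : j ≤ i) hi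
  refine ⟨cons h q, isCycle_iff_isPath_tail_and_le_length.mpr ⟨?_, ?_⟩, by simp [hq]⟩
  · simpa using isPath_of_isSubwalk hqp hp
  · simp only [length_cons, hq]; omega

lemma snd_eq_of_support_getElem?_one {p : G.Walk u v} {w : V} (h : p.support[1]? = some w) :
    p.snd = w := by
  rw [snd, getVert_eq_getD_support, List.getD_eq_getElem?_getD, h, Option.getD_some]

open Finset in
theorem IsPath.degree_snd_le [Fintype V] [DecidableRel G.Adj] {p : G.Walk u v} (hp : p.IsPath)
    (hspan : ∀ w, w ∈ p.support) (hG : G.IsBipartite) {t : ℕ} (ht : 2 ≤ t)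
    (hcyc : ∀ w (c : G.Walk w w), c.IsCycle → c.length < 2 * t) :
    G.degree p.snd ≤ t := by
  classical
  rw [← card_neighborFinset_eq_degree]
  calc #(G.neighborFinset p.snd)
      ≤ #((range t).image fun k => p.getVert (k + k)) := card_le_card ?_
    _ ≤ t := card_image_le.trans (card_range t).le
  intro w hw
  obtain ⟨i, rfl, hi⟩ := mem_support_iff_exists_getVert.mp (hspan w)
  have hadj : G.Adj (p.getVert 1) (p.getVert i) := (mem_neighborFinset ..).mp hw
  have h1 : 1 ≤ p.length := by
    by_contra! h0
    rw [getVert_of_length_le p (by omega : p.length ≤ 1),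
      getVert_of_length_le p (by omega : p.length ≤ i)] at hadj
    exact hadj.ne rfl
  obtain ⟨k, rfl⟩ : Even i := by
    simpa [Nat.odd_add_one, parity_simps] using odd_add_of_adj_getVert hG p hi h1 hadj.symm
  refine mem_image.mpr ⟨k, mem_range.mpr ?_, rfl⟩
  by_contra! hk
  obtain ⟨c, hc, hlen⟩ := hp.exists_isCycle_of_adj_getVert (by omega) hi hadj.symm
  have := hcyc _ c hc
  omega

end SimpleGraph.Walk

theorem hamilton_path_second_vertex_degree_general {V : Type*} [Fintype V] [DecidableEq V]
    (G : SimpleGraph V) [DecidableRel G.Adj]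
    (X Y : Finset V) (hdisj : Disjoint X Y)
    (hbip : ∀ a b, G.Adj a b → (a ∈ X ∧ b ∈ Y) ∨ (a ∈ Y ∧ b ∈ X))
    (t : ℕ) (ht : 2 ≤ t)
    (hnocycle : ∀ (w : V) (c : G.Walk w w), c.IsCycle → c.length < 2 * t)
    {u₁ uₛ : V} (p : G.Walk u₁ uₛ) (hp : p.IsPath) (hham : p.IsHamiltonian) :
    (∀ w, p.support[1]? = some w → G.degree w ≤ t) ∧
    (∀ w, p.reverse.support[1]? = some w → G.degree w ≤ t) := by
  have hG : G.IsBipartite := IsBipartiteWith.isBipartite (s := X) (t := Y)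
    ⟨Finset.disjoint_coe.mpr hdisj, fun a b h => by simpa using hbip a b h⟩
  have key : ∀ {a b : V} (q : G.Walk a b), q.IsPath → (∀ v, v ∈ q.support) →
      ∀ w, q.support[1]? = some w → G.degree w ≤ t := by
    intro a b q hq hspan w hw
    rw [← q.snd_eq_of_support_getElem?_one hw]
    exact hq.degree_snd_le hspan hG ht hnocycle
  exact ⟨key p hp hham.mem_support,
    key p.reverse hp.reverse fun v => by simpa using hham.mem_support v⟩

/-- Let G be bipartite with no cycle of length at least 2t (t ≥ 2) and
let P = u₁u₂⋯u_s be a Hamilton path of G. Then d(u₂,G) ≤ t and d(u_{s−1},G) ≤ t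
(u₂ is the second vertex of P and u_{s−1} the second vertex of the reversed path). -/
theorem hamilton_path_second_vertex_degree {V : Type*} [Fintype V] [DecidableEq V]
    (G : SimpleGraph V) [DecidableRel G.Adj]
    (X Y : Finset V) (hdisj : Disjoint X Y) (hcover : X ∪ Y = Finset.univ)
    (hbip : ∀ a b, G.Adj a b → (a ∈ X ∧ b ∈ Y) ∨ (a ∈ Y ∧ b ∈ X))
    (t : ℕ) (ht : 2 ≤ t)
    (hnocycle : ∀ (w : V) (c : G.Walk w w), c.IsCycle → c.length < 2 * t)
    {u₁ uₛ : V} (p : G.Walk u₁ uₛ) (hp : p.IsPath) (hham : p.IsHamiltonian) :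
    (∀ w, p.support[1]? = some w → G.degree w ≤ t) ∧
    (∀ w, p.reverse.support[1]? = some w → G.degree w ≤ t) :=
  hamilton_path_second_vertex_degree_general G X Y hdisj hbip t ht hnocycle p hp hham
end

section
/- In the graph G of the previous construction (k ≥ 2 even; bipartition (X₁ ∪ X₂ ∪ {u}, Y₁ ∪ Y₂ ∪ {v}); K_{k,k} on X₁ ∪ Y₁ and on X₂ ∪ Y₂; u adjacent to Y₁ ∪ {v}; v adjacent to X₂ ∪ {u}; a perfect matching between X₁ and Y₂), G does not contain k vertex-disjoint cycles of which k − 1 have length 4 and one has length 6 spanning all 4k + 2 vertices. Consequently, G does not contain a spanning subgraph that is a disjoint union of k − 1 cycles of length 4 and one cycle of length 6. -/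
/-!
Let `S = X₁ ∪ Y₁ ∪ {u}`, a set of `2k + 1` vertices. The only edges leaving `S` are the
matching edges `x – f x` and `u – v`, so the cut of `S` is a matching, and its endpoints outside
`S`, which lie in `Y₂ ∪ {v}`, are pairwise non-adjacent. Hence a 4-cycle lies entirely inside or
entirely outside `S`, while a cycle never has exactly one vertex on one side of a matching cut.
For a spanning family of `k - 1` four-cycles and one six-cycle, `S` would then meet the six-cycle
in `2k + 1 - 4m` vertices, which is `1` or `5` since `k` is even: impossible.
-/

open Finset Function

theorem Finset.sum_card_inter_of_pairwise_disjoint {ι α : Type*} [Fintype ι] [DecidableEq α]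
    {A : ι → Finset α} (hA : Pairwise (Disjoint on A)) (hcov : ∀ a, ∃ i, a ∈ A i)
    (s : Finset α) : ∑ i, #(s ∩ A i) = #s := by
  rw [← card_biUnion fun i _ j _ hij => (hA hij).mono inter_subset_right inter_subset_right,
    ← inter_biUnion]
  congr 1
  exact inter_eq_left.2 fun a _ => by simpa using hcov a

namespace SimpleGraph

variable {V : Type*} {G : SimpleGraph V}

def IsMatchingCut (G : SimpleGraph V) (S : Finset V) : Prop :=
  ∀ ⦃a b b'⦄, G.Adj a b → G.Adj a b' → (a ∈ S ↔ b ∉ S) → (a ∈ S ↔ b' ∉ S) → b = b'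

namespace Walk

lemma IsCycle.card_support_toFinset [DecidableEq V] {x : V} {c : G.Walk x x} (hc : c.IsCycle) :
    #c.support.toFinset = c.length := by
  rw [← c.cons_tail_support, List.toFinset_cons,
    insert_eq_of_mem (List.mem_toFinset.2 (c.end_mem_tail_support hc.not_nil)),
    List.toFinset_card_of_nodup hc.support_nodup, List.length_tail, length_support,
    Nat.add_sub_cancel]

lemma exists_support_eq_of_length_eq_four {x : V} (c : G.Walk x x) (h : c.length = 4) :
    ∃ a b d, G.Adj x a ∧ G.Adj a b ∧ G.Adj b d ∧ G.Adj d x ∧ c.support = [x, a, b, d, x] := by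
  rcases c with _ | ⟨h₁, _ | ⟨h₂, _ | ⟨h₃, _ | ⟨h₄, _ | ⟨_, _⟩⟩⟩⟩⟩ <;> simp at h
  exact ⟨_, _, _, h₁, h₂, h₃, h₄, rfl⟩

end Walk

variable [DecidableEq V]

namespace IsMatchingCut

variable {S : Finset V} {x : V} {c : G.Walk x x}

/-- The two neighbours of `w` on the cycle are distinct, so they cannot both lie across the
cut. -/
lemma exists_mem_support_ne_mem_iff (hS : G.IsMatchingCut S) (hc : c.IsCycle) {w : V}
    (hw : w ∈ c.support) : ∃ w' ∈ c.support, w' ≠ w ∧ (w' ∈ S ↔ w ∈ S) := by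
  by_contra! hside
  set c' := c.rotate w hw
  have hc' : c'.IsCycle := hc.rotate hw
  have hmem : ∀ {y}, y ∈ c'.support → y ∈ c.support := (c.mem_support_rotate_iff w hw).1
  have hsnd := c'.adj_snd hc'.not_nil
  have hpen := (c'.adj_penultimate hc'.not_nil).symm
  refine hc'.snd_ne_penultimate (hS hsnd hpen ?_ ?_)
  · have := hside _ (hmem (c'.getVert_mem_support 1)) hsnd.ne.symm
    tauto
  · have := hside _ (hmem (c'.getVert_mem_support _)) hpen.ne.symm
    tauto

lemma card_inter_support_ne_one (hS : G.IsMatchingCut S) (hc : c.IsCycle) :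
    #(S ∩ c.support.toFinset) ≠ 1 := by
  intro h
  obtain ⟨w, hw⟩ := card_eq_one.1 h
  have hwS : w ∈ S ∩ c.support.toFinset := hw ▸ mem_singleton_self w
  rw [mem_inter, List.mem_toFinset] at hwS
  obtain ⟨w', hw', hne, hiff⟩ := hS.exists_mem_support_ne_mem_iff hc hwS.2
  have : w' ∈ S ∩ c.support.toFinset := by simp [hiff.2 hwS.1, hw']
  exact hne (by simpa [hw] using this)

lemma card_support_sdiff_ne_one (hS : G.IsMatchingCut S) (hc : c.IsCycle) :
    #(c.support.toFinset \ S) ≠ 1 := by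
  intro h
  obtain ⟨w, hw⟩ := card_eq_one.1 h
  have hwS : w ∈ c.support.toFinset \ S := hw ▸ mem_singleton_self w
  rw [mem_sdiff, List.mem_toFinset] at hwS
  obtain ⟨w', hw', hne, hiff⟩ := hS.exists_mem_support_ne_mem_iff hc hwS.1
  have : w' ∈ c.support.toFinset \ S := by simp [hw', hiff.not.2 hwS.2]
  exact hne (by simpa [hw] using this)

lemma mem_iff_mem_of_four_cycle (hS : G.IsMatchingCut S)
    (hind : ∀ ⦃a b a' b'⦄, G.Adj a b → G.Adj a' b' → a ∈ S → b ∉ S → a' ∈ S → b' ∉ S →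
      ¬ G.Adj b b')
    {a b c d : V} (hab : G.Adj a b) (hbc : G.Adj b c) (hcd : G.Adj c d) (hda : G.Adj d a)
    (hac : a ≠ c) (hbd : b ≠ d) : a ∈ S ↔ b ∈ S := by
  have key : ∀ {a b c d : V}, G.Adj a b → G.Adj b c → G.Adj c d → G.Adj d a → a ≠ c → b ≠ d →
      a ∈ S → b ∈ S := by
    intro a b c d hab hbc hcd hda hac hbd ha
    by_contra hb
    -- then `c d` is a second cut edge, and its outer end `c` is adjacent to `b`
    have hd : d ∈ S := by
      by_contra hd
      exact hbd (hS hab hda.symm (iff_of_true ha hb) (iff_of_true ha hd))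
    have hc : c ∉ S := fun hc =>
      hac (hS hab.symm hbc (iff_of_false hb (not_not.2 ha)) (iff_of_false hb (not_not.2 hc)))
    exact hind hab hcd.symm ha hb hd hc hbc
  exact ⟨key hab hbc hcd hda hac hbd, key hab.symm hda.symm hcd.symm hbc.symm hbd hac⟩

lemma card_inter_support_of_length_eq_four (hS : G.IsMatchingCut S)
    (hind : ∀ ⦃a b a' b'⦄, G.Adj a b → G.Adj a' b' → a ∈ S → b ∉ S → a' ∈ S → b' ∉ S →
      ¬ G.Adj b b')
    (hc : c.IsCycle) (h4 : c.length = 4) :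
    #(S ∩ c.support.toFinset) = 0 ∨ #(S ∩ c.support.toFinset) = 4 := by
  obtain ⟨a, b, d, hxa, hab, hbd, hdx, hsupp⟩ := c.exists_support_eq_of_length_eq_four h4
  have hnodup := hc.support_nodup
  rw [hsupp] at hnodup
  simp only [List.tail_cons, List.nodup_cons, List.mem_cons, not_or,
    List.not_mem_nil, not_false_eq_true, List.nodup_nil, and_true] at hnodup
  have hxa' := hS.mem_iff_mem_of_four_cycle hind hxa hab hbd hdx (by tauto) (by tauto)
  have hab' := hS.mem_iff_mem_of_four_cycle hind hab hbd hdx hxa (by tauto) (by tauto)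
  have hbd' := hS.mem_iff_mem_of_four_cycle hind hbd hdx hxa hab (by tauto) (by tauto)
  by_cases hx : x ∈ S
  · right
    rw [inter_eq_right.2, hc.card_support_toFinset, h4]
    intro y hy
    simp only [hsupp, List.mem_toFinset, List.mem_cons] at hy
    rcases hy with rfl | rfl | rfl | rfl | rfl | hy <;> tauto
  · left
    rw [card_eq_zero, ← disjoint_iff_inter_eq_empty, disjoint_right]
    intro y hy
    simp only [hsupp, List.mem_toFinset, List.mem_cons] at hy
    rcases hy with rfl | rfl | rfl | rfl | rfl | hy <;> tauto

end IsMatchingCut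

lemma isMatchingCut_of_adj_imp {S A : Finset V} {f : V → V} {u v : V} (hf : Set.InjOn f A)
    (hu : u ∉ A) (hv : ∀ a ∈ A, f a ≠ v)
    (hcross : ∀ ⦃a b⦄, G.Adj a b → a ∈ S → b ∉ S → (a ∈ A ∧ b = f a) ∨ (a = u ∧ b = v)) :
    G.IsMatchingCut S := by
  intro a b b' hab hab' hb hb'
  by_cases ha : a ∈ S
  · have := hcross hab ha (hb.1 ha)
    have := hcross hab' ha (hb'.1 ha)
    grind
  · have := hcross hab.symm (not_not.1 (hb.not.1 ha)) ha
    have := hcross hab'.symm (not_not.1 (hb'.not.1 ha)) ha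
    grind [Set.InjOn]

end SimpleGraph

open SimpleGraph

lemma extremal_cut_edge {V : Type*} [DecidableEq V] {G : SimpleGraph V}
    {X₁ X₂ Y₁ Y₂ : Finset V} {u v : V} {f : V → V}
    (hd₁ : Disjoint X₁ X₂) (hd₃ : Disjoint X₁ Y₂) (hd₄ : Disjoint X₂ Y₁) (hd₆ : Disjoint Y₁ Y₂)
    (huv : u ≠ v) (hu : u ∉ X₁ ∪ X₂ ∪ Y₁ ∪ Y₂) (hv : v ∉ X₁ ∪ X₂ ∪ Y₁ ∪ Y₂)
    (hadj : ∀ a b, G.Adj a b ↔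
      (a ∈ X₁ ∧ b ∈ Y₁) ∨ (b ∈ X₁ ∧ a ∈ Y₁) ∨
      (a ∈ X₂ ∧ b ∈ Y₂) ∨ (b ∈ X₂ ∧ a ∈ Y₂) ∨
      (a ∈ X₁ ∧ b = f a) ∨ (b ∈ X₁ ∧ a = f b) ∨
      (a = u ∧ (b ∈ Y₁ ∨ b = v)) ∨ (b = u ∧ (a ∈ Y₁ ∨ a = v)) ∨
      (a = v ∧ b ∈ X₂) ∨ (b = v ∧ a ∈ X₂))
    ⦃a b : V⦄ (hab : G.Adj a b) (ha : a ∈ insert u (X₁ ∪ Y₁)) (hb : b ∉ insert u (X₁ ∪ Y₁)) :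
    (a ∈ X₁ ∧ b = f a) ∨ (a = u ∧ b = v) := by
  rw [hadj] at hab
  simp only [mem_insert, mem_union] at ha hb hu hv
  grind [Finset.disjoint_left]

lemma extremal_cut_ends_not_adj {V : Type*} [DecidableEq V] {G : SimpleGraph V}
    {X₁ X₂ Y₁ Y₂ : Finset V} {u v : V} {f : V → V}
    (hd₁ : Disjoint X₁ X₂) (hd₃ : Disjoint X₁ Y₂) (hd₄ : Disjoint X₂ Y₁) (hd₅ : Disjoint X₂ Y₂)
    (hd₆ : Disjoint Y₁ Y₂) (huv : u ≠ v) (hu : u ∉ X₁ ∪ X₂ ∪ Y₁ ∪ Y₂)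
    (hv : v ∉ X₁ ∪ X₂ ∪ Y₁ ∪ Y₂) (hf₁ : ∀ x ∈ X₁, f x ∈ Y₂)
    (hadj : ∀ a b, G.Adj a b ↔
      (a ∈ X₁ ∧ b ∈ Y₁) ∨ (b ∈ X₁ ∧ a ∈ Y₁) ∨
      (a ∈ X₂ ∧ b ∈ Y₂) ∨ (b ∈ X₂ ∧ a ∈ Y₂) ∨
      (a ∈ X₁ ∧ b = f a) ∨ (b ∈ X₁ ∧ a = f b) ∨
      (a = u ∧ (b ∈ Y₁ ∨ b = v)) ∨ (b = u ∧ (a ∈ Y₁ ∨ a = v)) ∨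
      (a = v ∧ b ∈ X₂) ∨ (b = v ∧ a ∈ X₂))
    ⦃a b a' b' : V⦄ (hab : G.Adj a b) (hab' : G.Adj a' b')
    (ha : a ∈ insert u (X₁ ∪ Y₁)) (hb : b ∉ insert u (X₁ ∪ Y₁))
    (ha' : a' ∈ insert u (X₁ ∪ Y₁)) (hb' : b' ∉ insert u (X₁ ∪ Y₁)) : ¬ G.Adj b b' := by
  have hend : ∀ ⦃a b⦄, G.Adj a b → a ∈ insert u (X₁ ∪ Y₁) → b ∉ insert u (X₁ ∪ Y₁) →
      b = v ∨ b ∈ Y₂ := fun a b hab ha hb => by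
    rcases extremal_cut_edge hd₁ hd₃ hd₄ hd₆ huv hu hv hadj hab ha hb with ⟨ha, rfl⟩ | ⟨-, rfl⟩
    exacts [Or.inr (hf₁ a ha), Or.inl rfl]
  have hb₂ := hend hab ha hb
  have hb₂' := hend hab' ha' hb'
  rw [hadj]
  simp only [mem_union] at hu hv
  grind [Finset.disjoint_left]

theorem extremal_construction_no_spanning_cycles_general {V : Type*} [DecidableEq V]
    (G : SimpleGraph V)
    (k : ℕ) (hke : Even k)
    (X₁ X₂ Y₁ Y₂ : Finset V) (u v : V)
    (hX₁ : X₁.card = k) (hY₁ : Y₁.card = k)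
    (hd₁ : Disjoint X₁ X₂) (hd₂ : Disjoint X₁ Y₁) (hd₃ : Disjoint X₁ Y₂)
    (hd₄ : Disjoint X₂ Y₁) (hd₅ : Disjoint X₂ Y₂) (hd₆ : Disjoint Y₁ Y₂)
    (huv : u ≠ v)
    (hu : u ∉ X₁ ∪ X₂ ∪ Y₁ ∪ Y₂) (hv : v ∉ X₁ ∪ X₂ ∪ Y₁ ∪ Y₂)
    (f : V → V) (hf₁ : ∀ x ∈ X₁, f x ∈ Y₂) (hf₂ : Set.InjOn f ↑X₁)
    (hadj : ∀ a b, G.Adj a b ↔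
      (a ∈ X₁ ∧ b ∈ Y₁) ∨ (b ∈ X₁ ∧ a ∈ Y₁) ∨
      (a ∈ X₂ ∧ b ∈ Y₂) ∨ (b ∈ X₂ ∧ a ∈ Y₂) ∨
      (a ∈ X₁ ∧ b = f a) ∨ (b ∈ X₁ ∧ a = f b) ∨
      (a = u ∧ (b ∈ Y₁ ∨ b = v)) ∨ (b = u ∧ (a ∈ Y₁ ∨ a = v)) ∨
      (a = v ∧ b ∈ X₂) ∨ (b = v ∧ a ∈ X₂)) :
    ¬ ∃ (g : Fin k → V) (c : ∀ i, G.Walk (g i) (g i)),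
        (∀ i, (c i).IsCycle) ∧
        (∀ i j, i ≠ j → ∀ w, w ∈ (c i).support → w ∉ (c j).support) ∧
        (∀ w : V, ∃ i, w ∈ (c i).support) ∧
        (∃ i₀, (c i₀).length = 6 ∧ ∀ i, i ≠ i₀ → (c i).length = 4) := by
  rintro ⟨g, c, hcyc, hdisj, hcov, i₀, hlen6, hlen4⟩
  set S := insert u (X₁ ∪ Y₁)
  have hcross := extremal_cut_edge hd₁ hd₃ hd₄ hd₆ huv hu hv hadj
  have hS : G.IsMatchingCut S := isMatchingCut_of_adj_imp hf₂ (fun h => hu (by simp [h]))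
    (fun a ha h => hv (by rw [← h]; simp [hf₁ a ha])) hcross
  have hind := extremal_cut_ends_not_adj hd₁ hd₃ hd₄ hd₅ hd₆ huv hu hv hf₁ hadj
  have hcard : #S = 2 * k + 1 := by
    have hu' : u ∉ X₁ ∪ Y₁ := by simp only [mem_union, not_or] at hu ⊢; tauto
    rw [card_insert_of_notMem hu', card_union_of_disjoint hd₂, hX₁, hY₁]
    ring
  have hsum := sum_card_inter_of_pairwise_disjoint (A := fun i => (c i).support.toFinset)
    (fun i j hij => disjoint_left.2 fun w hi hj =>
      hdisj i j hij w (List.mem_toFinset.1 hi) (List.mem_toFinset.1 hj))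
    (fun w => (hcov w).imp fun i => List.mem_toFinset.2) S
  have h4 : ∀ i ∈ univ.erase i₀, 4 ∣ #(S ∩ (c i).support.toFinset) := fun i hi => by
    rcases hS.card_inter_support_of_length_eq_four hind (hcyc i) (hlen4 i (ne_of_mem_erase hi))
      with h | h <;> simp [h]
  obtain ⟨m, hm⟩ := dvd_sum h4
  have h6₁ := hS.card_inter_support_ne_one (hcyc i₀)
  have h6₂ := hS.card_support_sdiff_ne_one (hcyc i₀)
  have h6 := card_inter_add_card_sdiff (c i₀).support.toFinset S
  rw [(hcyc i₀).card_support_toFinset, hlen6, inter_comm] at h6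
  rw [← add_sum_erase _ _ (mem_univ i₀), hm, hcard] at hsum
  obtain ⟨j, rfl⟩ := hke
  omega

/-- In the extremal construction (even k ≥ 2), G contains no spanning
collection of k vertex-disjoint cycles of which k − 1 have length 4 and one has
length 6. -/
theorem extremal_construction_no_spanning_cycles {V : Type*} [Fintype V] [DecidableEq V]
    (G : SimpleGraph V) [DecidableRel G.Adj]
    (k : ℕ) (hk : 2 ≤ k) (hke : Even k)
    (X₁ X₂ Y₁ Y₂ : Finset V) (u v : V)
    (hX₁ : X₁.card = k) (hX₂ : X₂.card = k) (hY₁ : Y₁.card = k) (hY₂ : Y₂.card = k)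
    (hd₁ : Disjoint X₁ X₂) (hd₂ : Disjoint X₁ Y₁) (hd₃ : Disjoint X₁ Y₂)
    (hd₄ : Disjoint X₂ Y₁) (hd₅ : Disjoint X₂ Y₂) (hd₆ : Disjoint Y₁ Y₂)
    (huv : u ≠ v)
    (hu : u ∉ X₁ ∪ X₂ ∪ Y₁ ∪ Y₂) (hv : v ∉ X₁ ∪ X₂ ∪ Y₁ ∪ Y₂)
    (hunion : X₁ ∪ X₂ ∪ Y₁ ∪ Y₂ ∪ {u, v} = Finset.univ)
    (f : V → V) (hf₁ : ∀ x ∈ X₁, f x ∈ Y₂) (hf₂ : Set.InjOn f ↑X₁)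
    (hf₃ : Y₂ = X₁.image f)
    (hadj : ∀ a b, G.Adj a b ↔
      (a ∈ X₁ ∧ b ∈ Y₁) ∨ (b ∈ X₁ ∧ a ∈ Y₁) ∨
      (a ∈ X₂ ∧ b ∈ Y₂) ∨ (b ∈ X₂ ∧ a ∈ Y₂) ∨
      (a ∈ X₁ ∧ b = f a) ∨ (b ∈ X₁ ∧ a = f b) ∨
      (a = u ∧ (b ∈ Y₁ ∨ b = v)) ∨ (b = u ∧ (a ∈ Y₁ ∨ a = v)) ∨
      (a = v ∧ b ∈ X₂) ∨ (b = v ∧ a ∈ X₂)) :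
    ¬ ∃ (g : Fin k → V) (c : ∀ i, G.Walk (g i) (g i)),
        (∀ i, (c i).IsCycle) ∧
        (∀ i j, i ≠ j → ∀ w, w ∈ (c i).support → w ∉ (c j).support) ∧
        (∀ w : V, ∃ i, w ∈ (c i).support) ∧
        (∃ i₀, (c i₀).length = 6 ∧ ∀ i, i ≠ i₀ → (c i).length = 4) :=
  extremal_construction_no_spanning_cycles_general G k hke X₁ X₂ Y₁ Y₂ u v hX₁ hY₁ hd₁ hd₂ hd₃ hd₄
    hd₅ hd₆ huv hu hv f hf₁ hf₂ hadj
end
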